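/- In the dynamic network creation game in which players' communication cost uses the temporal shortest distance, for every real atomic cost α with 1 ≤ α < 2 and every number of players n ≥ 2, we have 1 ≤ PoS(α, n) ≤ PoA(α, n) ≤ 4/3. -/

import Mathlib

/-!
For distinct players `u, v` let the pair cost be `α·|λ(uv)| + 2·d(u,v)`; twice the social cost is
the sum of the pair costs over all ordered pairs of distinct players. For `α ≥ 1` every pair cost
is at least `3`: it is `≥ α + 2` if `uv` is an edge and `≥ 4` otherwise. In a Nash equilibrium with
`α < 2` every temporal distance is at most `2`, and no edge carries two labels, since the player
who bought the later one could drop it. Hence every pair cost is at most `4`, and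
`PoA ≤ 4/3`. The complete graph with all labels `0` is a Nash equilibrium, because no temporal path
can use two of its edges; so Nash equilibria exist and `PoS ≤ PoA`.
-/

open scoped ENNReal BigOperators

/-- A temporal path from `u` to `v`, given as a list of steps `(next vertex, time label)`.
The labelling `lab` gives, for each (ordered) pair of vertices, the set of time labels of the
edge joining them (empty if there is no edge); it is symmetric for temporal graphs arising
from strategy profiles.  The conditions say that consecutive steps use time labels belonging
to the corresponding edge, that time labels strictly increase along the path, that no vertex is
repeated, and that the path ends at `v`. -/
def IsTemporalPath {V : Type*} (lab : V → V → Set ℕ) (u v : V) (p : List (V × ℕ)) : Prop :=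
  List.Chain (fun a b => b.2 ∈ lab a.1 b.1) (u, 0) p ∧
  List.Chain' (· < ·) (p.map Prod.snd) ∧
  (u :: p.map Prod.fst).Nodup ∧
  (u :: p.map Prod.fst).getLast (List.cons_ne_nil _ _) = v

/-- The temporal shortest distance from `u` to `v`: the least number of edges of a temporal
path from `u` to `v` (`0` if `u = v`, `⊤` if there is no temporal path). -/
noncomputable def temporalDist {V : Type*} (lab : V → V → Set ℕ) (u v : V) : ℕ∞ :=
  sInf {n : ℕ∞ | ∃ p : List (V × ℕ), IsTemporalPath lab u v p ∧ (p.length : ℕ∞) = n}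

/-- The labelling of the communication temporal graph `𝒢[s]` of a strategy profile `s`:
`t` is a label of the edge `uv` iff `(u, t) ∈ s v` or `(v, t) ∈ s u`. -/
def profLab {V : Type*} (s : V → Finset (V × ℕ)) : V → V → Set ℕ :=
  fun u v => {t | (u, t) ∈ s v ∨ (v, t) ∈ s u}

/-- The (finite) set of time labels of the edge `uv` in the communication temporal graph. -/
def labelFinset {V : Type*} [DecidableEq V] (s : V → Finset (V × ℕ)) (u v : V) : Finset ℕ :=
  (((s v).filter (fun p => p.1 = u)).image Prod.snd) ∪
    (((s u).filter (fun p => p.1 = v)).image Prod.snd)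

/-- The total number of time labels `∑ e ∈ E, |λ(e)|` of the communication temporal graph
(each unordered pair is counted once, whence the division by `2`). -/
def numLabels {V : Type*} [Fintype V] [DecidableEq V] (s : V → Finset (V × ℕ)) : ℕ :=
  (∑ u : V, ∑ v : V, if u = v then 0 else (labelFinset s u v).card) / 2

/-- The number of edges `|E|` of the communication temporal graph. -/
def numEdges {V : Type*} [Fintype V] [DecidableEq V] (s : V → Finset (V × ℕ)) : ℕ :=
  ((Finset.univ : Finset (V × V)).filter
    (fun q => q.1 ≠ q.2 ∧ (labelFinset s q.1 q.2).Nonempty)).card / 2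

/-- The social cost `c[s] = α·∑_{e ∈ E} |λ(e)| + ∑_{(u,v) ∈ V×V} d_{𝒢[s]}(u,v)`
of a strategy profile `s` for atomic cost `α`. -/
noncomputable def socialCost {V : Type*} [Fintype V] [DecidableEq V]
    (α : ℝ) (s : V → Finset (V × ℕ)) : ℝ≥0∞ :=
  ENNReal.ofReal α * (numLabels s : ℝ≥0∞) +
    ∑ u : V, ∑ v : V, (temporalDist (profLab s) u v : ℝ≥0∞)

/-- The individual cost `c[s](v) = α·|s(v)| + ∑_{w ∈ V} d_{𝒢[s]}(v,w)` of player `v`. -/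
noncomputable def indivCost {V : Type*} [Fintype V]
    (α : ℝ) (s : V → Finset (V × ℕ)) (v : V) : ℝ≥0∞ :=
  ENNReal.ofReal α * ((s v).card : ℝ≥0∞) +
    ∑ w : V, (temporalDist (profLab s) v w : ℝ≥0∞)

/-- A strategy profile is a Nash equilibrium if no player can strictly decrease its individual
cost by changing only its own strategy. -/
def IsNash {V : Type*} [Fintype V] [DecidableEq V] (α : ℝ) (s : V → Finset (V × ℕ)) : Prop :=
  ∀ (v : V) (t : Finset (V × ℕ)),
    ¬ indivCost α (Function.update s v t) v < indivCost α s v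

/-- The optimal social cost `c*(α, n)`: the minimum social cost over all strategy profiles
with `n` players and atomic cost `α`. -/
noncomputable def optCost (α : ℝ) (n : ℕ) : ℝ≥0∞ :=
  ⨅ s : Fin n → Finset (Fin n × ℕ), socialCost α s

/-- The price of anarchy `PoA(α, n)`: the maximum social cost of a Nash equilibrium with `n`
players and atomic cost `α`, divided by the optimal social cost `c*(α, n)`. -/
noncomputable def PoA (α : ℝ) (n : ℕ) : ℝ≥0∞ :=
  (⨆ s : {s : Fin n → Finset (Fin n × ℕ) // IsNash α s}, socialCost α s.1) / optCost α n

/-- The price of stability `PoS(α, n)`: the minimum social cost of a Nash equilibrium with `n`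
players and atomic cost `α`, divided by the optimal social cost `c*(α, n)`. -/
noncomputable def PoS (α : ℝ) (n : ℕ) : ℝ≥0∞ :=
  (⨅ s : {s : Fin n → Finset (Fin n × ℕ) // IsNash α s}, socialCost α s.1) / optCost α n

open Finset

variable {V : Type*}

section TemporalDist

variable {lab lab' : V → V → Set ℕ} {u v w : V}

lemma temporalDist_le_length {p : List (V × ℕ)} (hp : IsTemporalPath lab u v p) :
    temporalDist lab u v ≤ p.length :=
  sInf_le ⟨p, hp, rfl⟩

@[simp]
lemma temporalDist_self (lab : V → V → Set ℕ) (u : V) : temporalDist lab u u = 0 :=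
  nonpos_iff_eq_zero.1 <| temporalDist_le_length (p := []) ⟨.singleton _, .nil, by simp, rfl⟩

lemma one_le_temporalDist (h : u ≠ v) : 1 ≤ temporalDist lab u v := by
  refine le_sInf ?_
  rintro _ ⟨_ | ⟨a, p⟩, ⟨-, -, -, hlast⟩, rfl⟩
  · exact absurd hlast h
  · simp

lemma temporalDist_le_one {τ : ℕ} (hτ : τ ∈ lab u v) : temporalDist lab u v ≤ 1 := by
  obtain rfl | h := eq_or_ne u v
  · simp
  · exact temporalDist_le_length (p := [(v, τ)])
      ⟨.cons_cons hτ (.singleton _), .singleton _, by simp [h], rfl⟩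

lemma two_le_temporalDist (h : u ≠ v) (hno : lab u v = ∅) : 2 ≤ temporalDist lab u v := by
  refine le_sInf ?_
  rintro _ ⟨_ | ⟨a, _ | ⟨b, p⟩⟩, ⟨hc, -, -, hlast⟩, rfl⟩
  · exact absurd hlast h
  · obtain rfl : a.1 = v := by simpa using hlast
    simpa [hno] using (List.isChain_cons_cons.1 hc).1
  · simp [add_assoc, one_add_one_eq_two]

/-- A temporal path from `u` never returns to `u`, so only its first edge is incident to `u`. -/
lemma temporalDist_le_of_relabel (hother : ∀ a b, a ≠ u → b ≠ u → lab a b ⊆ lab' a b)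
    (hfirst : ∀ b, ∀ τ ∈ lab u b, ∃ τ' ≤ τ, τ' ∈ lab' u b) (w : V) :
    temporalDist lab' u w ≤ temporalDist lab u w := by
  refine le_sInf ?_
  rintro _ ⟨_ | ⟨a, p⟩, ⟨hc, hinc, hnd, hlast⟩, rfl⟩
  · exact sInf_le ⟨[], ⟨.singleton _, .nil, hnd, hlast⟩, rfl⟩
  have hpu : ∀ b ∈ a :: p, b.1 ≠ u := by
    simp only [List.map_cons, List.nodup_cons, List.mem_cons, List.mem_map] at hnd
    intro b hb h
    rcases List.mem_cons.1 hb with rfl | hb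
    exacts [hnd.1 (.inl h.symm), hnd.1 (.inr ⟨b, hb, h⟩)]
  obtain ⟨hfst, hc⟩ := List.isChain_cons_cons.1 hc
  obtain ⟨τ', hτ', hmem⟩ := hfirst a.1 a.2 hfst
  refine sInf_le ⟨(a.1, τ') :: p, ⟨List.isChain_cons_cons.2 ⟨hmem, ?_⟩, ?_, hnd, hlast⟩, rfl⟩
  · have hc' : List.IsChain (fun x y => y.2 ∈ lab' x.1 y.1) (a :: p) :=
      hc.imp_of_mem_imp fun x y hx hy h => hother _ _ (hpu x hx) (hpu y hy) h
    exact hc'.imp_head (x := a) (y := (a.1, τ')) (fun h => h)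
  · exact List.IsChain.imp_head (fun h => lt_of_le_of_lt hτ' h) hinc

lemma nonempty_of_temporalDist_ne_top (hzero : ∀ a b, a ≠ u → b ≠ u → ∀ τ ∈ lab a b, τ = 0)
    (hw : w ≠ u) (hfin : temporalDist lab u w ≠ ⊤) : (lab u w).Nonempty := by
  rw [Set.nonempty_iff_ne_empty]
  intro hno
  refine hfin (sInf_eq_top.2 ?_)
  rintro _ ⟨_ | ⟨a, _ | ⟨b, p⟩⟩, ⟨hc, hinc, hnd, hlast⟩, rfl⟩
  · exact absurd hlast.symm hw
  · obtain rfl : a.1 = w := by simpa using hlast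
    simpa [hno] using (List.isChain_cons_cons.1 hc).1
  · -- a temporal path cannot use two edges, since the second one would need a positive label
    simp only [List.map_cons, List.nodup_cons, List.mem_cons, not_or] at hnd
    have hb : b.2 = 0 := hzero _ _ (Ne.symm hnd.1.1) (Ne.symm hnd.1.2.1) _
      (List.isChain_cons_cons.1 (List.isChain_cons_cons.1 hc).2).1
    have hab : a.2 < b.2 := (List.isChain_cons_cons.1 hinc).1
    omega

end TemporalDist

section ProfileLabels

lemma profLab_symm (s : V → Finset (V × ℕ)) (u v : V) : profLab s u v = profLab s v u :=
  Set.ext fun _ => or_comm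

@[simp]
lemma coe_labelFinset [DecidableEq V] (s : V → Finset (V × ℕ)) (u v : V) :
    (labelFinset s u v : Set ℕ) = profLab s u v := by
  ext τ
  simp [labelFinset, profLab]

variable [DecidableEq V] {s : V → Finset (V × ℕ)} {u v b : V} {τ : ℕ}

lemma profLab_update_of_ne (t : Finset (V × ℕ)) {x y : V} (hx : x ≠ v) (hy : y ≠ v) :
    profLab (Function.update s v t) x y = profLab s x y := by
  simp [profLab, Function.update_of_ne hx, Function.update_of_ne hy]

lemma profLab_subset_profLab_update {t : Finset (V × ℕ)} (h : s v ⊆ t) (x y : V) :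
    profLab s x y ⊆ profLab (Function.update s v t) x y := by
  have hmono : ∀ z, s z ⊆ Function.update s v t z := fun z => by
    rcases eq_or_ne z v with rfl | hz
    · simpa using h
    · simp [Function.update_of_ne hz]
  exact fun τ => Or.imp (fun h => hmono y h) (fun h => hmono x h)

lemma mem_profLab_update_erase {q : V × ℕ} (h : τ ∈ profLab s u b) (hq : (b, τ) ≠ q) :
    τ ∈ profLab (Function.update s u ((s u).erase q)) u b := by
  rcases h with h | h
  · left
    rcases eq_or_ne b u with rfl | hb
    · simpa [hq] using h
    · simpa [Function.update_of_ne hb] using h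
  · right
    simpa [hq] using h

end ProfileLabels

section OffDiagonalSums

lemma even_sum_offDiag [DecidableEq V] (s : Finset V) (f : V → V → ℕ)
    (hf : ∀ u v, f u v = f v u) : Even (∑ p ∈ s.offDiag, f p.1 p.2) := by
  rw [← ZMod.natCast_eq_zero_iff_even, Nat.cast_sum]
  refine sum_involution (fun p _ => p.swap) (fun p _ => ?_) (fun p hp _ => ?_) (fun p hp => ?_)
    (fun p _ => p.swap_swap)
  · rw [Prod.fst_swap, Prod.snd_swap, hf p.2 p.1, ← two_mul]
    exact mul_eq_zero_of_left (ZMod.natCast_self 2) _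
  · exact fun h => (mem_offDiag.1 hp).2.2 (congrArg Prod.snd h)
  · simp only [mem_offDiag, Prod.fst_swap, Prod.snd_swap] at hp ⊢
    exact ⟨hp.2.1, hp.1, Ne.symm hp.2.2⟩

variable [Fintype V] [DecidableEq V]

lemma sum_sum_eq_sum_offDiag {M : Type*} [AddCommMonoid M] (f : V → V → M)
    (hf : ∀ v, f v v = 0) : ∑ u, ∑ v, f u v = ∑ p ∈ (univ : Finset V).offDiag, f p.1 p.2 := by
  rw [← sum_product', ← diag_union_offDiag, sum_union (disjoint_diag_offDiag _), sum_diag]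
  simp [hf]

end OffDiagonalSums

section PairCost

variable [DecidableEq V]

lemma labelFinset_symm (s : V → Finset (V × ℕ)) (u v : V) :
    labelFinset s u v = labelFinset s v u :=
  coe_injective (by simp [profLab_symm])

noncomputable def pairCost (α : ℝ) (s : V → Finset (V × ℕ)) (u v : V) : ℝ≥0∞ :=
  ENNReal.ofReal α * #(labelFinset s u v) + 2 * temporalDist (profLab s) u v

variable [Fintype V]

lemma two_mul_numLabels (s : V → Finset (V × ℕ)) :
    2 * numLabels s = ∑ p ∈ (univ : Finset V).offDiag, #(labelFinset s p.1 p.2) := by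
  have h : ∑ u, ∑ v, (if u = v then 0 else #(labelFinset s u v)) =
      ∑ p ∈ (univ : Finset V).offDiag, #(labelFinset s p.1 p.2) := by
    rw [sum_sum_eq_sum_offDiag (fun u v => if u = v then 0 else #(labelFinset s u v))
      fun v => if_pos rfl]
    exact sum_congr rfl fun p hp => if_neg (mem_offDiag.1 hp).2.2
  rw [numLabels, h]
  exact Nat.two_mul_div_two_of_even
    (even_sum_offDiag univ (fun u v => #(labelFinset s u v)) fun u v => by rw [labelFinset_symm])

lemma two_mul_socialCost (α : ℝ) (s : V → Finset (V × ℕ)) :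
    2 * socialCost α s = ∑ p ∈ (univ : Finset V).offDiag, pairCost α s p.1 p.2 := by
  have hL : (2 : ℝ≥0∞) * numLabels s =
      ∑ p ∈ (univ : Finset V).offDiag, (#(labelFinset s p.1 p.2) : ℝ≥0∞) := by
    exact_mod_cast congrArg (Nat.cast : ℕ → ℝ≥0∞) (two_mul_numLabels s)
  have hD := sum_sum_eq_sum_offDiag (fun u v => (temporalDist (profLab s) u v : ℝ≥0∞)) (by simp)
  simp only [socialCost, pairCost, sum_add_distrib, ← mul_sum, ← hL, hD]
  ring

end PairCost

section CostBounds

variable [DecidableEq V] {α : ℝ}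

lemma three_le_pairCost (hα : 1 ≤ α) (s : V → Finset (V × ℕ)) {u v : V} (huv : u ≠ v) :
    3 ≤ pairCost α s u v := by
  rcases (labelFinset s u v).eq_empty_or_nonempty with hno | hlab
  · have h2 : (2 : ℝ≥0∞) ≤ temporalDist (profLab s) u v := by
      exact_mod_cast two_le_temporalDist huv (by rw [← coe_labelFinset, hno, coe_empty])
    calc (3 : ℝ≥0∞) ≤ 2 * 2 := by norm_num
      _ ≤ pairCost α s u v := le_add_left (by gcongr)
  · have h1 : (1 : ℝ≥0∞) ≤ temporalDist (profLab s) u v := by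
      exact_mod_cast one_le_temporalDist huv
    have hc : (1 : ℝ≥0∞) ≤ #(labelFinset s u v) := by exact_mod_cast hlab.card_pos
    calc (3 : ℝ≥0∞) = 1 * 1 + 2 * 1 := by norm_num
      _ ≤ pairCost α s u v := by
        unfold pairCost
        gcongr
        exact ENNReal.one_le_ofReal.2 hα

variable [Fintype V]

lemma three_mul_card_offDiag_le_two_mul_socialCost (hα : 1 ≤ α) (s : V → Finset (V × ℕ)) :
    3 * #(univ : Finset V).offDiag ≤ 2 * socialCost α s := by
  rw [two_mul_socialCost, mul_comm, ← nsmul_eq_mul]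
  exact card_nsmul_le_sum _ _ _ fun p hp => three_le_pairCost hα s (mem_offDiag.1 hp).2.2

lemma indivCost_update_union_le (s : V → Finset (V × ℕ)) (v : V) (F : Finset V) :
    indivCost α (Function.update s v (s v ∪ F.image fun x => (x, 0))) v ≤
      ENNReal.ofReal α * #(s v) + ∑ x ∈ Fᶜ, (temporalDist (profLab s) v x : ℝ≥0∞) +
        (ENNReal.ofReal α + 1) * #F := by
  set s' := Function.update s v (s v ∪ F.image fun x => (x, 0))
  have hsub := profLab_subset_profLab_update (s := s) (v := v)
    (t := s v ∪ F.image fun x => (x, 0)) subset_union_left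
  have hcard : (#(s' v) : ℝ≥0∞) ≤ #(s v) + #F := by
    simp only [s', Function.update_self]
    exact_mod_cast (card_union_le _ _).trans (Nat.add_le_add_left card_image_le _)
  have hle : ∀ x, temporalDist (profLab s') v x ≤ temporalDist (profLab s) v x :=
    temporalDist_le_of_relabel (fun a b _ _ => hsub a b) fun b τ hτ => ⟨τ, le_rfl, hsub v b hτ⟩
  have hF : ∀ x ∈ F, temporalDist (profLab s') v x ≤ 1 := fun x hx =>
    temporalDist_le_one (τ := 0) (Or.inr (by simp [s', hx]))
  rw [indivCost, ← sum_compl_add_sum F]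
  calc ENNReal.ofReal α * #(s' v) + (∑ x ∈ Fᶜ, (temporalDist (profLab s') v x : ℝ≥0∞) +
        ∑ x ∈ F, (temporalDist (profLab s') v x : ℝ≥0∞))
      ≤ ENNReal.ofReal α * (#(s v) + #F) + (∑ x ∈ Fᶜ, (temporalDist (profLab s) v x : ℝ≥0∞) +
        ∑ x ∈ F, (1 : ℝ≥0∞)) := by
        gcongr with x _ x hx
        · exact_mod_cast hle x
        · exact_mod_cast hF x hx
    _ = _ := by simp only [sum_const, nsmul_one]; ring

end CostBounds

namespace IsNash

variable [Fintype V] [DecidableEq V] {α : ℝ} {s : V → Finset (V × ℕ)}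

lemma indivCost_le_update (hN : IsNash α s) (v : V) (t : Finset (V × ℕ)) :
    indivCost α s v ≤ indivCost α (Function.update s v t) v :=
  not_lt.1 (hN v t)

/-- Otherwise `v` could buy an edge at time `0` to every player at distance `≥ 3`, paying
`α < 2` and saving at least `2` per such player. -/
lemma temporalDist_le_two (hN : IsNash α s) (hα : α < 2) (v w : V) :
    temporalDist (profLab s) v w ≤ 2 := by
  by_contra hw
  set F := univ.filter fun x => 2 < temporalDist (profLab s) v x
  have hwF : w ∈ F := by simpa [F] using hw
  have hF0 : (#F : ℝ≥0∞) ≠ 0 := by exact_mod_cast (card_pos.2 ⟨w, hwF⟩).ne'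
  have hnear : ENNReal.ofReal α * #(s v) + ∑ x ∈ Fᶜ, (temporalDist (profLab s) v x : ℝ≥0∞) ≠ ⊤ :=
    ENNReal.add_ne_top.2 ⟨ENNReal.mul_ne_top ENNReal.ofReal_ne_top (ENNReal.natCast_ne_top _),
      ENNReal.sum_ne_top.2 fun x hx => ne_top_of_le_ne_top (b := 2) (by simp)
        (by exact_mod_cast not_lt.1 (by simpa [F] using hx))⟩
  have hfar : 3 * (#F : ℝ≥0∞) ≤ ∑ x ∈ F, (temporalDist (profLab s) v x : ℝ≥0∞) := by
    rw [mul_comm, ← nsmul_eq_mul]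
    refine card_nsmul_le_sum _ _ _ fun x hx => ?_
    exact_mod_cast Order.add_one_le_of_lt (mem_filter.1 hx).2
  have hcost := (hN.indivCost_le_update v _).trans (indivCost_update_union_le s v F)
  rw [indivCost, ← sum_compl_add_sum F, ← add_assoc] at hcost
  have h3 : 3 * (#F : ℝ≥0∞) ≤ (ENNReal.ofReal α + 1) * #F :=
    (ENNReal.add_le_add_iff_left hnear).1 ((add_le_add le_rfl hfar).trans hcost)
  have hα3 : ENNReal.ofReal α + 1 < 3 := by
    simpa [two_add_one_eq_three] using
      ENNReal.add_lt_add_right ENNReal.one_ne_top (ENNReal.ofReal_lt_ofNat.2 hα)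
  rw [mul_comm, mul_comm _ (#F : ℝ≥0∞)] at h3
  exact h3.not_gt (ENNReal.mul_lt_mul_right hF0 (ENNReal.natCast_ne_top _) hα3)

lemma indivCost_ne_top (hN : IsNash α s) (hα : α < 2) (v : V) : indivCost α s v ≠ ⊤ :=
  ENNReal.add_ne_top.2 ⟨ENNReal.mul_ne_top ENNReal.ofReal_ne_top (ENNReal.natCast_ne_top _),
    ENNReal.sum_ne_top.2 fun x _ => ne_top_of_le_ne_top (b := 2) (by simp)
      (by exact_mod_cast hN.temporalDist_le_two hα v x)⟩

/-- Dropping the later of two labels of an edge saves `α` and lengthens no temporal path. -/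
lemma notMem_of_mem_profLab_of_lt (hN : IsNash α s) (hα : 0 < α) {u v : V}
    (hfin : indivCost α s u ≠ ⊤) {t₁ t₂ : ℕ} (h₁ : t₁ ∈ profLab s u v) (h₁₂ : t₁ < t₂) :
    (v, t₂) ∉ s u := by
  intro h₂
  set s' := Function.update s u ((s u).erase (v, t₂))
  have hdist : ∀ x, temporalDist (profLab s') u x ≤ temporalDist (profLab s) u x := by
    refine temporalDist_le_of_relabel (fun a b ha hb => (profLab_update_of_ne _ ha hb).ge)
      fun b τ hτ => ?_
    by_cases hq : (b, τ) = (v, t₂)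
    · obtain ⟨rfl, rfl⟩ := Prod.mk.inj hq
      exact ⟨t₁, h₁₂.le, mem_profLab_update_erase h₁ (by simp [h₁₂.ne])⟩
    · exact ⟨τ, le_rfl, mem_profLab_update_erase hτ hq⟩
  have hcard : (#(s' u) : ℝ≥0∞) + 1 = #(s u) := by
    simp only [s', Function.update_self]
    exact_mod_cast card_erase_add_one h₂
  have hsave : indivCost α s' u + ENNReal.ofReal α ≤ indivCost α s u :=
    calc indivCost α s' u + ENNReal.ofReal α
        = ENNReal.ofReal α * (#(s' u) + 1) +
          ∑ x, (temporalDist (profLab s') u x : ℝ≥0∞) := by rw [indivCost]; ring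
      _ ≤ indivCost α s u := by
        rw [hcard, indivCost]
        gcongr with x
        exact_mod_cast hdist x
  have hle := (add_le_add (hN.indivCost_le_update u _) le_rfl).trans hsave
  have hα0 : ENNReal.ofReal α ≤ 0 := (ENNReal.add_le_add_iff_left hfin).1 (by simpa using hle)
  exact (ENNReal.ofReal_pos.2 hα).ne' (nonpos_iff_eq_zero.1 hα0)

lemma card_labelFinset_le_one (hN : IsNash α s) (hα₀ : 0 < α) (hα₂ : α < 2) (u v : V) :
    #(labelFinset s u v) ≤ 1 := by
  have key : ∀ t₁ ∈ profLab s u v, ∀ t₂ ∈ profLab s u v, ¬ t₁ < t₂ := by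
    rintro t₁ h₁ t₂ (h₂ | h₂) h₁₂
    · exact hN.notMem_of_mem_profLab_of_lt hα₀ (hN.indivCost_ne_top hα₂ v)
        (by rwa [profLab_symm]) h₁₂ h₂
    · exact hN.notMem_of_mem_profLab_of_lt hα₀ (hN.indivCost_ne_top hα₂ u) h₁ h₁₂ h₂
  refine card_le_one.2 fun t₁ h₁ t₂ h₂ => ?_
  rw [← mem_coe, coe_labelFinset] at h₁ h₂
  exact le_antisymm (not_lt.1 (key t₂ h₂ t₁ h₁)) (not_lt.1 (key t₁ h₁ t₂ h₂))

lemma pairCost_le_four (hN : IsNash α s) (hα₀ : 0 < α) (hα₂ : α < 2) (u v : V) :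
    pairCost α s u v ≤ 4 := by
  have hα : ENNReal.ofReal α ≤ 2 := ENNReal.ofReal_le_ofNat.2 hα₂.le
  rcases (labelFinset s u v).eq_empty_or_nonempty with hno | ⟨τ, hτ⟩
  · calc pairCost α s u v = 2 * temporalDist (profLab s) u v := by simp [pairCost, hno]
      _ ≤ 2 * 2 := by gcongr; exact_mod_cast hN.temporalDist_le_two hα₂ u v
      _ = 4 := by norm_num
  · have hd : temporalDist (profLab s) u v ≤ 1 :=
      temporalDist_le_one (by rwa [← coe_labelFinset, mem_coe])
    calc pairCost α s u v ≤ 2 * 1 + 2 * 1 := by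
          unfold pairCost
          gcongr
          · exact_mod_cast hN.card_labelFinset_le_one hα₀ hα₂ u v
          · exact_mod_cast hd
      _ = 4 := by norm_num

lemma two_mul_socialCost_le (hN : IsNash α s) (hα₀ : 0 < α) (hα₂ : α < 2) :
    2 * socialCost α s ≤ 4 * #(univ : Finset V).offDiag := by
  rw [two_mul_socialCost, mul_comm, ← nsmul_eq_mul]
  exact sum_le_card_nsmul _ _ _ fun p _ => hN.pairCost_le_four hα₀ hα₂ p.1 p.2

end IsNash

section CompleteProfile

variable (V) [Fintype V] [LinearOrder V]

def completeProfile : V → Finset (V × ℕ) :=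
  fun v => (univ.filter (v < ·)).image fun w => (w, 0)

variable {V}

lemma mem_completeProfile {v w : V} {τ : ℕ} :
    (w, τ) ∈ completeProfile V v ↔ v < w ∧ τ = 0 := by
  simp [completeProfile, eq_comm]

lemma mem_profLab_completeProfile {u v : V} {τ : ℕ} :
    τ ∈ profLab (completeProfile V) u v ↔ u ≠ v ∧ τ = 0 := by
  simp only [profLab, Set.mem_ofPred_eq, mem_completeProfile]
  rcases lt_trichotomy u v with h | rfl | h
  · simp [h, h.ne, not_lt_of_gt h]
  · simp
  · simp [h, h.ne', not_lt_of_gt h]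

/-- No temporal path uses two edges of the complete profile, so after a deviation of `v` every
player `w > v` is either bought by `v` directly or unreachable from `v`. -/
theorem isNash_completeProfile (α : ℝ) : IsNash α (completeProfile V) := by
  intro v t
  rw [not_lt]
  set s' := Function.update (completeProfile V) v t
  by_cases hunreach : ∃ w, temporalDist (profLab s') v w = ⊤
  · obtain ⟨w, hw⟩ := hunreach
    have htop : indivCost α s' v = ⊤ :=
      ENNReal.add_eq_top.2 (Or.inr (ENNReal.sum_eq_top.2 ⟨w, mem_univ w, by simp [hw]⟩))
    exact htop ▸ le_top
  · have hreach : ∀ w, temporalDist (profLab s') v w ≠ ⊤ := not_exists.1 hunreach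
    have hzero : ∀ a b, a ≠ v → b ≠ v → ∀ τ ∈ profLab s' a b, τ = 0 := fun a b ha hb τ hτ => by
      rw [profLab_update_of_ne _ ha hb] at hτ
      exact (mem_profLab_completeProfile.1 hτ).2
    have hbuy : univ.filter (v < ·) ⊆ t.image Prod.fst := by
      intro w hw
      have hvw : v < w := (mem_filter.1 hw).2
      obtain ⟨τ, hτ | hτ⟩ := nonempty_of_temporalDist_ne_top hzero hvw.ne' (hreach w)
      · simp only [s', Function.update_of_ne hvw.ne', mem_completeProfile] at hτ
        exact absurd hτ.1 (not_lt_of_gt hvw)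
      · exact mem_image.2 ⟨(w, τ), by simpa [s'] using hτ, rfl⟩
    have hcard : #(completeProfile V v) ≤ #t :=
      calc #(completeProfile V v) = #(univ.filter (v < ·)) :=
            card_image_of_injective _ fun a b h => congrArg Prod.fst h
        _ ≤ #(t.image Prod.fst) := card_le_card hbuy
        _ ≤ #t := card_image_le
    have hdist : ∀ w, temporalDist (profLab (completeProfile V)) v w ≤
        temporalDist (profLab s') v w := by
      intro w
      rcases eq_or_ne v w with rfl | hw
      · simp
      · exact (temporalDist_le_one (mem_profLab_completeProfile.2 ⟨hw, rfl⟩)).trans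
          (one_le_temporalDist hw)
    have hs'v : s' v = t := Function.update_self _ _ _
    rw [indivCost, indivCost, hs'v]
    gcongr with w
    exact_mod_cast hdist w

end CompleteProfile

lemma three_mul_card_offDiag_le_two_mul_optCost {α : ℝ} (hα : 1 ≤ α) (n : ℕ) :
    3 * ((univ : Finset (Fin n)).offDiag.card : ℝ≥0∞) ≤ 2 * optCost α n := by
  rw [optCost, ENNReal.mul_iInf_of_ne two_ne_zero ENNReal.ofNat_ne_top]
  exact le_iInf fun s => three_mul_card_offDiag_le_two_mul_socialCost hα s

lemma two_mul_iSup_socialCost_le {α : ℝ} (hα₀ : 0 < α) (hα₂ : α < 2) (n : ℕ) :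
    2 * ⨆ s : {s : Fin n → Finset (Fin n × ℕ) // IsNash α s}, socialCost α s.1 ≤
      4 * ((univ : Finset (Fin n)).offDiag.card : ℝ≥0∞) := by
  rw [ENNReal.mul_iSup]
  exact iSup_le fun s => s.2.two_mul_socialCost_le hα₀ hα₂

/-- For every atomic cost `1 ≤ α < 2` and every number of players `n ≥ 2`, we have
`1 ≤ PoS(α, n) ≤ PoA(α, n) ≤ 4/3`. -/
theorem statement_2 (α : ℝ) (hα1 : 1 ≤ α) (hα2 : α < 2) (n : ℕ) (hn : 2 ≤ n) :
    1 ≤ PoS α n ∧ PoS α n ≤ PoA α n ∧ PoA α n ≤ 4 / 3 := by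
  rw [PoS, PoA]
  set N : ℝ≥0∞ := ((univ : Finset (Fin n)).offDiag.card : ℝ≥0∞)
  set inf := ⨅ s : {s : Fin n → Finset (Fin n × ℕ) // IsNash α s}, socialCost α s.1
  set sup := ⨆ s : {s : Fin n → Finset (Fin n × ℕ) // IsNash α s}, socialCost α s.1
  have hN : N ≠ 0 := by
    have h01 : ((⟨0, by omega⟩, ⟨1, by omega⟩) : Fin n × Fin n) ∈ (univ : Finset _).offDiag := by
      simp [Fin.ext_iff]
    exact Nat.cast_ne_zero.2 (card_pos.2 ⟨_, h01⟩).ne'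
  have hopt : 3 * N ≤ 2 * optCost α n := three_mul_card_offDiag_le_two_mul_optCost hα1 n
  have hsup : 2 * sup ≤ 4 * N := two_mul_iSup_socialCost_le (by linarith) hα2 n
  have : Nonempty {s : Fin n → Finset (Fin n × ℕ) // IsNash α s} :=
    ⟨⟨completeProfile (Fin n), isNash_completeProfile α⟩⟩
  have hinf_sup : inf ≤ sup := iInf_le_iSup
  have hopt_inf : optCost α n ≤ inf := le_iInf fun s => iInf_le _ s.1
  have hopt0 : optCost α n ≠ 0 := fun h => hN (by simpa [h] using hopt)
  have hopt_top : optCost α n ≠ ⊤ := ne_top_of_le_ne_top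
    (ne_top_of_le_ne_top (ENNReal.mul_ne_top ENNReal.ofNat_ne_top (ENNReal.natCast_ne_top _)) hsup)
    ((hopt_inf.trans hinf_sup).trans (le_mul_of_one_le_left zero_le one_le_two))
  refine ⟨?_, ENNReal.div_le_div_right hinf_sup _, ?_⟩
  · exact (ENNReal.le_div_iff_mul_le (.inl hopt0) (.inl hopt_top)).2 (by rwa [one_mul])
  · calc sup / optCost α n = 2 * sup / (2 * optCost α n) :=
          (ENNReal.mul_div_mul_left _ _ two_ne_zero ENNReal.ofNat_ne_top).symm
      _ ≤ 4 * N / (3 * N) := ENNReal.div_le_div hsup hopt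
      _ = 4 / 3 := ENNReal.mul_div_mul_right _ _ hN (ENNReal.natCast_ne_top _)
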